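/- arXiv:2204.07879 — 5 statements merged into one kernel-verified Lean document; each statement's English description precedes it below -/
import Mathlib

section
/- Let $\sigma, \sigma' \in S_n$ with $\sigma'$ obtained from $\sigma$ by swapping the values at two indices $i < j$ (i.e., $\sigma'(i) = \sigma(j)$, $\sigma'(j) = \sigma(i)$, and $\sigma'(q) = \sigma(q)$ for $q \ne i,j$). Let $v_1,\dots,v_n, w_1,\dots,w_n \in \mathbb{R}$ with $w_i \le w_j$ and $v_{\sigma(i)} > v_{\sigma(j)}$. Then $\max\{|v_{\sigma'(i)} - w_i|, |v_{\sigma'(j)} - w_j|\} \le \max\{|v_{\sigma(i)} - w_i|, |v_{\sigma(j)} - w_j|\}$, and consequently $\max_q |v_{\sigma'(q)} - w_q| \le \max_q |v_{\sigma(q)} - w_q|$. -/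
open Finset

theorem exchange_inequality (n : ℕ) (σ σ' : Equiv.Perm (Fin n)) (i j : Fin n)
    (hij : i < j)
    (hσ'i : σ' i = σ j) (hσ'j : σ' j = σ i)
    (hσ'q : ∀ q, q ≠ i → q ≠ j → σ' q = σ q)
    (v w : Fin n → ℝ) (hw : w i ≤ w j) (hv : v (σ j) < v (σ i)) :
    max |v (σ' i) - w i| |v (σ' j) - w j| ≤ max |v (σ i) - w i| |v (σ j) - w j| ∧
    Finset.univ.sup' ⟨i, Finset.mem_univ i⟩ (fun q => |v (σ' q) - w q|) ≤
      Finset.univ.sup' ⟨i, Finset.mem_univ i⟩ (fun q => |v (σ q) - w q|) := by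
  have hl := le_max_left |v (σ i) - w i| |v (σ j) - w j|
  have hr := le_max_right |v (σ i) - w i| |v (σ j) - w j|
  have h1 := le_abs_self (v (σ i) - w i)
  have h2 := neg_abs_le (v (σ i) - w i)
  have h3 := le_abs_self (v (σ j) - w j)
  have h4 := neg_abs_le (v (σ j) - w j)
  have key : max |v (σ' i) - w i| |v (σ' j) - w j| ≤
      max |v (σ i) - w i| |v (σ j) - w j| := by
    rw [hσ'i, hσ'j, max_le_iff]
    constructor <;> rw [abs_sub_le_iff] <;> constructor <;> linarith
  refine ⟨key, ?_⟩
  have hmax : max |v (σ i) - w i| |v (σ j) - w j| ≤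
      Finset.univ.sup' ⟨i, Finset.mem_univ i⟩ (fun q => |v (σ q) - w q|) :=
    max_le (Finset.le_sup' (fun q => |v (σ q) - w q|) (Finset.mem_univ i))
      (Finset.le_sup' (fun q => |v (σ q) - w q|) (Finset.mem_univ j))
  apply Finset.sup'_le
  intro q _
  by_cases hqi : q = i
  · subst hqi
    exact le_trans (le_trans (le_max_left _ _) key) hmax
  by_cases hqj : q = j
  · subst hqj
    exact le_trans (le_trans (le_max_right _ _) key) hmax
  · rw [hσ'q q hqi hqj]
    exact Finset.le_sup' (fun q => |v (σ q) - w q|) (Finset.mem_univ q)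
end

section
/- Let $v_1 \le v_2 \le \dots \le v_n$ and $w_1 \le w_2 \le \dots \le w_n$ be real numbers, and suppose $v_i \ne w_j$ for all $i,j$ and $v_i \ne v_j$ for $i \ne j$. For each $i$, define $G_i = \sum_{j=1}^n \mathrm{sign}(v_i - w_j) - \sum_{j \ne i} \mathrm{sign}(v_i - v_j)$. Then for every $i$ with $v_i \ne w_i$, $\mathrm{sign}(v_i - w_i) \cdot G_i \ge 1$; in particular $G_i$ has the same sign as $v_i - w_i$. -/
open Finset

lemma sign_le_one' (x : ℝ) : Real.sign x ≤ 1 := by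
  unfold Real.sign; split_ifs <;> norm_num

lemma neg_one_le_sign' (x : ℝ) : -1 ≤ Real.sign x := by
  unfold Real.sign; split_ifs <;> norm_num

theorem gradient_direction (n : ℕ) (v w : Fin n → ℝ)
    (hv : Monotone v) (hw : Monotone w)
    (hvw : ∀ i j, v i ≠ w j) (hvinj : Function.Injective v) :
    ∀ i, v i ≠ w i →
      Real.sign (v i - w i) *
        ((∑ j, Real.sign (v i - w j)) -
          ∑ j ∈ Finset.univ.erase i, Real.sign (v i - v j)) ≥ 1 := by
  intro i hne
  have hsv : StrictMono v := hv.strictMono_of_injective hvinj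
  have hz : Real.sign (v i - v i) = 0 := by simp
  have hsum : (∑ j ∈ Finset.univ.erase i, Real.sign (v i - v j))
      = ∑ j, Real.sign (v i - v j) := Finset.sum_erase _ hz
  rw [hsum, ← Finset.sum_sub_distrib]
  set f : Fin n → ℝ := fun j => Real.sign (v i - w j) - Real.sign (v i - v j) with hf
  rcases hne.lt_or_gt with h | h
  · -- v i < w i
    have hs : Real.sign (v i - w i) = -1 := Real.sign_of_neg (by linarith)
    have hfi : f i = -1 := by simp [hf, hs]
    have hterm : ∀ j ∈ Finset.univ.erase i, f j ≤ 0 := by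
      intro j _
      rcases lt_or_ge j i with hj | hj
      · have h1 : Real.sign (v i - v j) = 1 :=
          Real.sign_of_pos (sub_pos.mpr (hsv hj))
        have := sign_le_one' (v i - w j)
        simp only [hf]; linarith
      · have hwj : v i < w j := lt_of_lt_of_le h (hw hj)
        have h1 : Real.sign (v i - w j) = -1 := Real.sign_of_neg (by linarith)
        have := neg_one_le_sign' (v i - v j)
        simp only [hf]; linarith
    have hle : (∑ j, f j) ≤ -1 := by
      rw [← Finset.add_sum_erase _ f (Finset.mem_univ i)]
      have h2 : (∑ j ∈ Finset.univ.erase i, f j) ≤ 0 := Finset.sum_nonpos hterm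
      linarith
    rw [hs]; nlinarith
  · -- w i < v i
    have hs : Real.sign (v i - w i) = 1 := Real.sign_of_pos (by linarith)
    have hfi : f i = 1 := by simp [hf, hs]
    have hterm : ∀ j ∈ Finset.univ.erase i, 0 ≤ f j := by
      intro j _
      rcases le_or_gt j i with hj | hj
      · have hwj : w j < v i := lt_of_le_of_lt (hw hj) h
        have h1 : Real.sign (v i - w j) = 1 := Real.sign_of_pos (by linarith)
        have := sign_le_one' (v i - v j)
        simp only [hf]; linarith
      · have h1 : Real.sign (v i - v j) = -1 :=
          Real.sign_of_neg (sub_neg.mpr (hsv hj))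
        have := neg_one_le_sign' (v i - w j)
        simp only [hf]; linarith
    have hle : 1 ≤ (∑ j, f j) := by
      rw [← Finset.add_sum_erase _ f (Finset.mem_univ i)]
      have h2 : 0 ≤ (∑ j ∈ Finset.univ.erase i, f j) := Finset.sum_nonneg hterm
      linarith
    rw [hs]; nlinarith
end

section
/- Consider the iteration $v^{(k+1)}_i = v^{(k)}_i - \gamma \, s^{(k)}_i$ on sorted real vectors, where $s^{(k)}_i = \mathrm{sign}(v^{(k)}_{\sigma_k(i)} - w_i)$ with $\sigma_k$ the sorting permutation at step $k$, started from distinct initial points $v^{(0)}_1, \dots, v^{(0)}_n$. Define $W_k = \min_{\sigma} \max_i |v^{(k)}_{\sigma(i)} - w_i|$. Then $W_{k+1} \le \max\{W_k - \gamma, \gamma\}$ for all $k$, and consequently $W_k \le \gamma$ for all $k \ge \lfloor W_0/\gamma \rfloor + 1$. -/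
/-!
Sorting is an optimal matching for the `W∞` cost: if `u ∘ σ` and `w` are both increasing, then
`max_i |u (σ i) - w i|` is the `W∞` distance. Each particle moves by `γ` towards its sorted partner,
which shrinks that deviation by `γ` or leaves it at most `γ`, so the matching `σ_k` witnesses
`W_{k+1} ≤ max (W_k - γ) γ`, and iterating gives `W_k ≤ max (W_0 - k γ) γ`.
-/

open Finset

theorem Equiv.Perm.exists_le_le_apply {α : Type*} [LinearOrder α] [LocallyFiniteOrderBot α]
    (π : Equiv.Perm α) (i : α) : ∃ j ≤ i, i ≤ π j := by
  by_contra! h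
  have hmaps : Set.MapsTo π (Iic i) (Iio i) := fun j hj => mem_Iio.2 (h j (mem_Iic.1 hj))
  have hcard := card_le_card_of_injOn π hmaps π.injective.injOn
  rw [Iic_eq_cons_Iio, card_cons] at hcard
  omega

section Rearrangement

variable {α β : Type*} [LinearOrder α] [LocallyFiniteOrderBot α]
  [AddCommGroup β] [LinearOrder β] [IsOrderedAddMonoid β]

theorem abs_sub_le_of_forall_abs_perm_sub_le {u w : α → β} (hu : Monotone u) (hw : Monotone w)
    (π : Equiv.Perm α) {M : β} (hπ : ∀ j, |u (π j) - w j| ≤ M) (i : α) : |u i - w i| ≤ M := by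
  obtain ⟨j, hji, hij⟩ := π.exists_le_le_apply i
  obtain ⟨l, hli, hil⟩ := Equiv.Perm.exists_le_le_apply π.symm i
  rw [abs_sub_le_iff]
  constructor
  · calc u i - w i ≤ u (π j) - w j := sub_le_sub (hu hij) (hw hji)
      _ ≤ M := (le_abs_self _).trans (hπ j)
  · calc w i - u i ≤ w (π.symm l) - u (π (π.symm l)) := by
          rw [Equiv.apply_symm_apply]
          exact sub_le_sub (hw hil) (hu hli)
      _ ≤ |u (π (π.symm l)) - w (π.symm l)| := by rw [abs_sub_comm]; exact le_abs_self _
      _ ≤ M := hπ _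

end Rearrangement

section Matching

variable {ι : Type*} [Fintype ι] [DecidableEq ι] [Nonempty ι]

noncomputable def matchingCost (u w : ι → ℝ) (τ : Equiv.Perm ι) : ℝ :=
  univ.sup' univ_nonempty fun i => |u (τ i) - w i|

noncomputable def wassersteinInftyDist (u w : ι → ℝ) : ℝ :=
  univ.inf' univ_nonempty (matchingCost u w)

theorem wassersteinInftyDist_le_matchingCost (u w : ι → ℝ) (τ : Equiv.Perm ι) :
    wassersteinInftyDist u w ≤ matchingCost u w τ :=
  inf'_le _ (mem_univ τ)

theorem wassersteinInftyDist_eq_matchingCost_of_monotone [LinearOrder ι] [LocallyFiniteOrderBot ι]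
    {u w : ι → ℝ} {σ : Equiv.Perm ι} (hu : Monotone (u ∘ σ)) (hw : Monotone w) :
    wassersteinInftyDist u w = matchingCost u w σ := by
  refine le_antisymm (wassersteinInftyDist_le_matchingCost u w σ) ?_
  obtain ⟨τ, -, hτ⟩ := exists_mem_eq_inf' univ_nonempty (matchingCost u w)
  rw [wassersteinInftyDist, hτ]
  refine sup'_le _ _ fun i _ => abs_sub_le_of_forall_abs_perm_sub_le hu hw (σ⁻¹ * τ) ?_ i
  intro j
  simp only [Function.comp_apply, Equiv.Perm.mul_apply, Equiv.Perm.coe_inv, Equiv.apply_symm_apply]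
  exact le_sup' (fun i => |u (τ i) - w i|) (mem_univ j)

end Matching

theorem abs_sub_mul_sign_le (d : ℝ) {γ : ℝ} (hγ : 0 < γ) :
    |d - γ * Real.sign d| ≤ max (|d| - γ) γ := by
  rcases lt_trichotomy d 0 with hd | rfl | hd
  · rw [Real.sign_of_neg hd, abs_of_neg hd]
    rcases le_total (-d - γ) γ with h | h
    · rw [max_eq_right h, abs_le]; constructor <;> linarith
    · rw [max_eq_left h, abs_le]; constructor <;> linarith
  · simp [hγ.le]
  · rw [Real.sign_of_pos hd, abs_of_pos hd]
    rcases le_total (d - γ) γ with h | h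
    · rw [max_eq_right h, abs_le]; constructor <;> linarith
    · rw [max_eq_left h, abs_le]; constructor <;> linarith

theorem matchingCost_sign_step_le {ι : Type*} [Fintype ι] [Nonempty ι] {u u' w : ι → ℝ}
    {τ : Equiv.Perm ι} {γ : ℝ} (hγ : 0 < γ)
    (hu' : ∀ i, u' (τ i) = u (τ i) - γ * Real.sign (u (τ i) - w i)) :
    matchingCost u' w τ ≤ max (matchingCost u w τ - γ) γ := by
  refine sup'_le _ _ fun i _ => ?_
  have hi : |u (τ i) - w i| ≤ matchingCost u w τ :=
    le_sup' (fun i => |u (τ i) - w i|) (mem_univ i)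
  calc |u' (τ i) - w i| = |(u (τ i) - w i) - γ * Real.sign (u (τ i) - w i)| := by
        rw [hu']; ring_nf
    _ ≤ max (|u (τ i) - w i| - γ) γ := abs_sub_mul_sign_le _ hγ
    _ ≤ max (matchingCost u w τ - γ) γ := by gcongr

theorem le_max_sub_mul_of_forall_succ_le {W : ℕ → ℝ} {γ : ℝ} (hγ : 0 ≤ γ)
    (hW : ∀ k, W (k + 1) ≤ max (W k - γ) γ) (k : ℕ) : W k ≤ max (W 0 - k * γ) γ := by
  induction k with
  | zero => simp
  | succ k ih =>
    refine (hW k).trans (max_le ?_ (le_max_right _ _))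
    push_cast
    rcases le_total (W 0 - k * γ) γ with h | h
    · exact le_max_of_le_right (by linarith [ih.trans_eq (max_eq_right h)])
    · exact le_max_of_le_left (by linarith [ih.trans_eq (max_eq_left h)])

theorem le_of_forall_succ_le_max_sub {W : ℕ → ℝ} {γ : ℝ} (hγ : 0 < γ)
    (hW : ∀ k, W (k + 1) ≤ max (W k - γ) γ) {k : ℕ} (hk : ⌊W 0 / γ⌋₊ + 1 ≤ k) : W k ≤ γ := by
  have hW0 : W 0 < k * γ := by
    rw [← div_lt_iff₀ hγ]
    exact (Nat.lt_floor_add_one _).trans_le (by exact_mod_cast hk)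
  exact (le_max_sub_mul_of_forall_succ_le hγ.le hW k).trans (max_le (by linarith) le_rfl)

theorem gd_convergence_general (n : ℕ) (hn : 0 < n) (w : Fin n → ℝ)
    (hw : Monotone w)
    (γ : ℝ) (hγ : 0 < γ)
    (v : ℕ → Fin n → ℝ) (σ : ℕ → Equiv.Perm (Fin n))
    (hsort : ∀ k, Monotone (fun i => v k (σ k i)))
    (hupd : ∀ k i, v (k + 1) (σ k i) = v k (σ k i) - γ * Real.sign (v k (σ k i) - w i)) :
    haveI : Nonempty (Fin n) := ⟨⟨0, hn⟩⟩
    let W : ℕ → ℝ := fun k =>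
      Finset.univ.inf' Finset.univ_nonempty
        (fun τ : Equiv.Perm (Fin n) =>
          Finset.univ.sup' Finset.univ_nonempty (fun i => |v k (τ i) - w i|))
    (∀ k, W (k + 1) ≤ max (W k - γ) γ) ∧
      ∀ k, ⌊W 0 / γ⌋₊ + 1 ≤ k → W k ≤ γ := by
  have : Nonempty (Fin n) := ⟨⟨0, hn⟩⟩
  intro W
  have hstep : ∀ k, W (k + 1) ≤ max (W k - γ) γ := fun k =>
    calc W (k + 1) ≤ matchingCost (v (k + 1)) w (σ k) :=
          wassersteinInftyDist_le_matchingCost _ _ _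
      _ ≤ max (matchingCost (v k) w (σ k) - γ) γ := matchingCost_sign_step_le hγ (hupd k)
      _ = max (W k - γ) γ := by
          rw [← wassersteinInftyDist_eq_matchingCost_of_monotone (hsort k) hw]; rfl
  exact ⟨hstep, fun k hk => le_of_forall_succ_le_max_sub hγ hstep hk⟩

theorem gd_convergence (n : ℕ) (hn : 0 < n) (w : Fin n → ℝ)
    (hw : Monotone w) (hwinj : Function.Injective w)
    (γ : ℝ) (hγ : 0 < γ)
    (v : ℕ → Fin n → ℝ) (σ : ℕ → Equiv.Perm (Fin n))
    (hsort : ∀ k, Monotone (fun i => v k (σ k i)))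
    (hupd : ∀ k i, v (k + 1) (σ k i) = v k (σ k i) - γ * Real.sign (v k (σ k i) - w i))
    (hinit : Function.Injective (v 0)) :
    haveI : Nonempty (Fin n) := ⟨⟨0, hn⟩⟩
    let W : ℕ → ℝ := fun k =>
      Finset.univ.inf' Finset.univ_nonempty
        (fun τ : Equiv.Perm (Fin n) =>
          Finset.univ.sup' Finset.univ_nonempty (fun i => |v k (τ i) - w i|))
    (∀ k, W (k + 1) ≤ max (W k - γ) γ) ∧
      ∀ k, ⌊W 0 / γ⌋₊ + 1 ≤ k → W k ≤ γ :=
  gd_convergence_general n hn w hw γ hγ v σ hsort hupd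
end

section
/- Define $g_m(x) = \frac{4}{\pi} \sum_{r=0}^{m} \frac{\sin((2r+1)x)}{2r+1}$. Then for every integer $m > 12$ and every real $x$ with $|x| \le \pi/4$, $|g_m(x)| \le 1.9$. -/
/-!
Since `sin x * ∑_{r<n} sin ((2r+1)x) = sin (nx)²`, the partial sums of the odd sines lie in
`[0, 1 / sin x]`; Abel summation then bounds the tail of `∑ sin ((2r+1)x) / (2r+1)` from index `R`
by `1 / ((2R+1) sin x)`, while each of the first `R` terms is at most `x`. With `R = ⌊4 / (5x)⌋`
the sum of the two bounds is at most `1.49 < 1.9 · π / 4`.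
-/

noncomputable def g (m : ℕ) (x : ℝ) : ℝ :=
  (4 / Real.pi) * ∑ r ∈ Finset.range (m + 1), Real.sin ((2 * r + 1) * x) / (2 * r + 1)

open Finset Real

theorem norm_sum_range_smul_le_of_antitone {E : Type*} [NormedAddCommGroup E] [NormedSpace ℝ E]
    {f : ℕ → ℝ} {z : ℕ → E} {B : ℝ} (hf : Antitone f) (hf0 : ∀ i, 0 ≤ f i)
    (hz : ∀ k, ‖∑ i ∈ range k, z i‖ ≤ B) (n : ℕ) :
    ‖∑ i ∈ range n, f i • z i‖ ≤ f 0 * B := by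
  have hstep : ∀ i, 0 ≤ f i - f (i + 1) := fun i => sub_nonneg.2 (hf i.le_succ)
  rw [sum_range_by_parts]
  calc _ ≤ ‖f (n - 1) • ∑ i ∈ range n, z i‖
        + ‖∑ i ∈ range (n - 1), (f (i + 1) - f i) • ∑ j ∈ range (i + 1), z j‖ := norm_sub_le _ _
    _ ≤ f (n - 1) * B + ∑ i ∈ range (n - 1), (f i - f (i + 1)) * B := by
        gcongr
        · rw [norm_smul, Real.norm_of_nonneg (hf0 _)]
          exact mul_le_mul_of_nonneg_left (hz n) (hf0 _)
        · refine (norm_sum_le _ _).trans (sum_le_sum fun i _ => ?_)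
          rw [norm_smul, Real.norm_of_nonpos (by linarith [hstep i]), neg_sub]
          exact mul_le_mul_of_nonneg_left (hz _) (hstep i)
    _ = f 0 * B := by rw [← sum_mul, sum_range_sub']; ring

theorem sin_mul_sum_range_sin_odd (x : ℝ) (n : ℕ) :
    sin x * ∑ r ∈ range n, sin ((2 * r + 1) * x) = sin (n * x) ^ 2 := by
  induction n with
  | zero => simp
  | succ n ih =>
    have hsub : sin x = sin ((n + 1) * x - n * x) := by congr 1; ring
    have hodd : sin ((2 * n + 1) * x) = sin ((n + 1) * x + n * x) := by congr 1; ring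
    rw [sum_range_succ, mul_add, ih]
    push_cast
    rw [hodd, hsub, sin_add, sin_sub]
    linear_combination (sin ((n + 1) * x) ^ 2) * sin_sq_add_cos_sq (n * x)
      - (sin (n * x) ^ 2) * sin_sq_add_cos_sq ((n + 1) * x)

section

variable {x : ℝ}

theorem sum_range_sin_odd_mem_Icc (hx : 0 < sin x) (n : ℕ) :
    ∑ r ∈ range n, sin ((2 * r + 1) * x) ∈ Set.Icc 0 (1 / sin x) := by
  have h := sin_mul_sum_range_sin_odd x n
  constructor
  · nlinarith [sq_nonneg (sin (n * x))]
  · rw [le_div_iff₀ hx]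
    nlinarith [sin_sq_le_one (n * x)]

theorem abs_sum_Ico_sin_odd_le (hx : 0 < sin x) (R n : ℕ) :
    |∑ r ∈ Ico R n, sin ((2 * r + 1) * x)| ≤ 1 / sin x := by
  rcases le_total R n with hRn | hnR
  · obtain ⟨hn0, hn1⟩ := sum_range_sin_odd_mem_Icc hx n
    obtain ⟨hR0, hR1⟩ := sum_range_sin_odd_mem_Icc hx R
    rw [sum_Ico_eq_sub _ hRn]
    exact abs_sub_le_of_nonneg_of_le hn0 hn1 hR0 hR1
  · rw [Ico_eq_empty_of_le hnR, sum_empty, abs_zero]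
    positivity

theorem abs_sum_Ico_sin_odd_div_le (hx : 0 < sin x) (R n : ℕ) :
    |∑ r ∈ Ico R n, sin ((2 * r + 1) * x) / (2 * r + 1)| ≤ 1 / ((2 * R + 1) * sin x) := by
  have hf : Antitone fun k : ℕ => 1 / (2 * ((R + k : ℕ) : ℝ) + 1) :=
    fun i j hij => one_div_le_one_div_of_le (by positivity) (by push_cast; gcongr)
  have hz : ∀ k, ‖∑ i ∈ range k, sin ((2 * ((R + i : ℕ) : ℝ) + 1) * x)‖ ≤ 1 / sin x := by
    intro k
    have hshift := sum_Ico_eq_sum_range (fun r : ℕ => sin ((2 * (r : ℝ) + 1) * x)) R (R + k)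
    rw [Nat.add_sub_cancel_left] at hshift
    rw [Real.norm_eq_abs, ← hshift]
    exact abs_sum_Ico_sin_odd_le hx R (R + k)
  have habel := norm_sum_range_smul_le_of_antitone hf (fun _ => by positivity) hz (n - R)
  simp only [smul_eq_mul, Real.norm_eq_abs, one_div_mul_eq_div, add_zero] at habel
  rw [sum_Ico_eq_sum_range]
  exact habel.trans_eq (by rw [div_div, mul_comm])

theorem abs_sum_range_sin_odd_div_le (hx : 0 ≤ x) (n : ℕ) :
    |∑ r ∈ range n, sin ((2 * r + 1) * x) / (2 * r + 1)| ≤ n * x := by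
  refine (abs_sum_le_sum_abs _ _).trans ?_
  calc _ ≤ ∑ _r ∈ range n, x := sum_le_sum fun r _ => by
          have hr : (0 : ℝ) < 2 * r + 1 := by positivity
          rw [abs_div, abs_of_pos hr, div_le_iff₀ hr, mul_comm x]
          exact abs_sin_le_abs.trans (abs_of_nonneg (by positivity)).le
    _ = n * x := by rw [sum_const, card_range, nsmul_eq_mul]

theorem abs_sum_range_sin_odd_div_le_add (hx : 0 ≤ x) (hsin : 0 < sin x) (R n : ℕ) :
    |∑ r ∈ range n, sin ((2 * r + 1) * x) / (2 * r + 1)|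
      ≤ R * x + 1 / ((2 * R + 1) * sin x) := by
  rcases le_total R n with hRn | hnR
  · rw [← sum_range_add_sum_Ico _ hRn]
    exact (abs_add_le _ _).trans
      (add_le_add (abs_sum_range_sin_odd_div_le hx R) (abs_sum_Ico_sin_odd_div_le hsin R n))
  · have hn : (n : ℝ) * x ≤ R * x := by gcongr
    have : 0 ≤ 1 / ((2 * R + 1) * sin x) := by positivity
    linarith [abs_sum_range_sin_odd_div_le hx n]

theorem exists_nat_mul_add_one_div_le (hx0 : 0 < x) (hx : x ≤ 4 / 5) :
    ∃ R : ℕ, R * x + 1 / ((2 * R + 1) * sin x) ≤ 149 / 100 := by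
  set R := ⌊4 / 5 / x⌋₊
  set t := (R : ℝ) * x with ht
  have hR1 : (1 : ℝ) ≤ R := by
    exact_mod_cast Nat.le_floor (by rw [Nat.cast_one, le_div_iff₀ hx0]; linarith)
  have htle : t ≤ 4 / 5 := (le_div_iff₀ hx0).1 (Nat.floor_le (by positivity))
  have htgt : 4 / 5 < t + x := by
    have h := (div_lt_iff₀ hx0).1 (Nat.lt_floor_add_one (4 / 5 / x))
    linarith
  have hxt : x ≤ t := le_mul_of_one_le_left hx0.le hR1
  -- concave in `t`, so it suffices to check `t = max x (4/5 - x)` and `t = 4/5`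
  have hkey : 1 ≤ (149 / 100 - t) * ((2 * t + x) * (1 - x ^ 2 / 6)) := by
    nlinarith [mul_nonneg (sub_nonneg.2 hxt) (sub_nonneg.2 htle),
      mul_nonneg (sub_nonneg.2 htgt.le) (sub_nonneg.2 htle),
      mul_nonneg hx0.le (sub_nonneg.2 hx), mul_nonneg (mul_nonneg hx0.le hx0.le) (sub_nonneg.2 htle)]
  have hsin : (2 * t + x) * (1 - x ^ 2 / 6) ≤ (2 * R + 1) * sin x := by
    calc (2 * t + x) * (1 - x ^ 2 / 6) = (2 * R + 1) * (x - x ^ 3 / 6) := by rw [ht]; ring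
      _ ≤ _ := by gcongr; exact (sin_gt_sub_cube hx0).le
  have hpos : 0 < (2 * t + x) * (1 - x ^ 2 / 6) := by nlinarith
  refine ⟨R, ?_⟩
  calc t + 1 / ((2 * R + 1) * sin x) ≤ t + 1 / ((2 * t + x) * (1 - x ^ 2 / 6)) := by
        gcongr
    _ ≤ 149 / 100 := by linarith [(div_le_iff₀ hpos).2 hkey]

theorem abs_sum_range_sin_odd_div_le_of_pos (hx0 : 0 < x) (hx : x ≤ 4 / 5) (n : ℕ) :
    |∑ r ∈ range n, sin ((2 * r + 1) * x) / (2 * r + 1)| ≤ 149 / 100 := by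
  obtain ⟨R, hR⟩ := exists_nat_mul_add_one_div_le hx0 hx
  have hsin : 0 < sin x := sin_pos_of_pos_of_lt_pi hx0 (by linarith [pi_gt_three])
  exact (abs_sum_range_sin_odd_div_le_add hx0.le hsin R n).trans hR

end

theorem g_neg (m : ℕ) (x : ℝ) : g m (-x) = -g m x := by
  simp only [g, mul_neg, sin_neg, neg_div, sum_neg_distrib]

theorem fourier_sign_bounded_near_zero_general (m : ℕ) (x : ℝ)
    (hx : |x| ≤ Real.pi / 4) : |g m x| ≤ 1.9 := by
  have habs : |g m x| = |g m (|x|)| := by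
    rcases abs_choice x with h | h <;> rw [h]
    rw [g_neg, abs_neg]
  rcases (abs_nonneg x).eq_or_lt with h0 | hpos
  · rw [habs, ← h0]
    norm_num [g]
  have hS := abs_sum_range_sin_odd_div_le_of_pos hpos (by linarith [pi_lt_d2]) (m + 1)
  rw [habs, g, abs_mul, abs_of_pos (by positivity : 0 < 4 / π), div_mul_eq_mul_div,
    div_le_iff₀ pi_pos]
  linarith [pi_gt_d2]

theorem fourier_sign_bounded_near_zero (m : ℕ) (hm : 12 < m) (x : ℝ)
    (hx : |x| ≤ Real.pi / 4) : |g m x| ≤ 1.9 :=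
  fourier_sign_bounded_near_zero_general m x hx
end

section
/- For $m \ge 1$ and $\Delta \in (0, \pi]$, the error term $\epsilon_m(\Delta) = \int_0^{\Delta} \left( \frac{1}{2\sin(t/2)} - \frac{1}{t} \right) \sin\left(\left(m+\tfrac{1}{2}\right)t\right) dt$ satisfies $|\epsilon_m(\Delta)| \le \frac{3}{2m}$. -/
/-!
Write `h t = 1 / (2 sin (t / 2)) - 1 / t`. On `(0, π]` the function `h` is nonnegative and
nondecreasing, so `h ≤ h π < 1 / 2`; monotonicity reduces to `x² cos x ≤ sin² x`, which follows
from `tan y ≥ y` at `y = x / 2`. Integrating by parts against `sin (l t) = (-cos (l t) / l)'` on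
`[a, Δ]`, the boundary terms and the integral of `h' ≥ 0` together contribute at most
`2 h(Δ) / l ≤ 1 / l`, uniformly in `a > 0`; letting `a → 0` gives `|ε_m(Δ)| ≤ 1 / (m + 1/2)`.
-/

open Real Set MeasureTheory intervalIntegral Filter

theorem abs_integral_mul_deriv_le_of_deriv_nonneg {u u' v v' : ℝ → ℝ} {a b C : ℝ} (hab : a ≤ b)
    (hu : ∀ x ∈ Icc a b, HasDerivAt u (u' x) x) (hu' : IntervalIntegrable u' volume a b)
    (hu'_nonneg : ∀ x ∈ Icc a b, 0 ≤ u' x) (hua : 0 ≤ u a)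
    (hv : ∀ x ∈ Icc a b, HasDerivAt v (v' x) x) (hv' : IntervalIntegrable v' volume a b)
    (hvC : ∀ x ∈ Icc a b, |v x| ≤ C) :
    |∫ x in a..b, u x * v' x| ≤ 2 * C * u b := by
  rw [← uIcc_of_le hab] at hu hv
  have hftc : ∫ x in a..b, u' x = u b - u a := integral_eq_sub_of_hasDerivAt hu hu'
  have hub : u a ≤ u b := by
    rw [← sub_nonneg, ← hftc]
    exact integral_nonneg hab hu'_nonneg
  have hrem : |∫ x in a..b, u' x * v x| ≤ C * (u b - u a) := by
    have := intervalIntegral.norm_integral_le_of_norm_le (μ := volume)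
      (f := fun x => u' x * v x) (g := fun x => C * u' x) hab (ae_of_all _ fun x hx => ?_)
      (hu'.const_mul C)
    · rwa [intervalIntegral.integral_const_mul, hftc] at this
    · have hx' := Ioc_subset_Icc_self hx
      rw [Real.norm_eq_abs, abs_mul, abs_of_nonneg (hu'_nonneg x hx'), mul_comm]
      exact mul_le_mul_of_nonneg_right (hvC x hx') (hu'_nonneg x hx')
  have hboundary : ∀ x ∈ Icc a b, 0 ≤ u x → |u x * v x| ≤ C * u x := fun x hx hux => by
    rw [abs_mul, abs_of_nonneg hux, mul_comm]
    exact mul_le_mul_of_nonneg_right (hvC x hx) hux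
  have hb := abs_le.1 (hboundary b ⟨hab, le_rfl⟩ (hua.trans hub))
  have ha := abs_le.1 (hboundary a ⟨le_rfl, hab⟩ hua)
  rw [integral_mul_deriv_eq_deriv_mul hu hv hu' hv', abs_le]
  constructor <;> linarith [abs_le.1 hrem]

theorem abs_intervalIntegral_le_of_forall_Ioc {f : ℝ → ℝ} {a b K : ℝ} (hab : a < b)
    (hf : IntervalIntegrable f volume a b) (h : ∀ c ∈ Ioc a b, |∫ x in c..b, f x| ≤ K) :
    |∫ x in a..b, f x| ≤ K := by
  have hcont : ContinuousWithinAt (fun c => |∫ x in c..b, f x|) (Ioc a b) a := by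
    have hf' := (intervalIntegrable_iff_integrableOn_Icc_of_le hab.le).1 hf
    rw [← uIcc_of_le hab.le] at hf'
    have := continuousOn_primitive_interval_left hf' a left_mem_uIcc
    rw [uIcc_of_le hab.le] at this
    exact (this.mono Ioc_subset_Icc_self).abs
  have := left_nhdsWithin_Ioc_neBot hab
  exact le_of_tendsto hcont (eventually_nhdsWithin_of_forall h)

theorem sq_mul_cos_le_sin_sq {x : ℝ} (hx : 0 ≤ x) (hxπ : x < π) : x ^ 2 * cos x ≤ sin x ^ 2 := by
  set y := x / 2
  have hx2 : x = 2 * y := by ring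
  have hy : 0 ≤ y := by positivity
  have hcy : 0 < cos y := cos_pos_of_mem_Ioo ⟨by linarith [pi_pos], by linarith⟩
  have htan : y * cos y ≤ sin y := by
    have := le_tan hy (by linarith)
    rwa [tan_eq_sin_div_cos, le_div_iff₀ hcy] at this
  have hsin : 2 * y * cos y ^ 2 ≤ sin x := by
    rw [hx2, sin_two_mul]; nlinarith
  have hcos : cos x ≤ (cos y ^ 2) ^ 2 := by
    rw [hx2, cos_two_mul]; nlinarith [sq_nonneg (cos y ^ 2 - 1)]
  calc x ^ 2 * cos x ≤ x ^ 2 * (cos y ^ 2) ^ 2 := by gcongr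
    _ = (2 * y * cos y ^ 2) ^ 2 := by rw [hx2]; ring
    _ ≤ sin x ^ 2 := pow_le_pow_left₀ (by positivity) hsin 2

/-- `D_m(t) = sin ((m + 1/2) t) / (2 sin (t / 2))` is the Dirichlet kernel; this is the gap between
its denominator and that of `sin ((m + 1/2) t) / t`. -/
noncomputable def dirichletCorrection (t : ℝ) : ℝ := 1 / (2 * sin (t / 2)) - 1 / t

noncomputable def dirichletCorrectionDeriv (t : ℝ) : ℝ :=
  1 / t ^ 2 - cos (t / 2) / (2 * sin (t / 2)) ^ 2

section DirichletCorrection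

variable {t : ℝ}

lemma sin_half_pos (ht : 0 < t) (ht' : t < 2 * π) : 0 < sin (t / 2) :=
  sin_pos_of_pos_of_lt_pi (by linarith) (by linarith)

lemma dirichletCorrection_nonneg (ht : 0 < t) (ht' : t < 2 * π) : 0 ≤ dirichletCorrection t := by
  have hs := sin_half_pos ht ht'
  have hle : sin (t / 2) ≤ t / 2 := sin_le (by linarith)
  rw [dirichletCorrection, sub_nonneg, div_le_div_iff₀ ht (by linarith)]
  linarith

lemma hasDerivAt_dirichletCorrection (ht : t ∈ Ioo 0 (2 * π)) :
    HasDerivAt dirichletCorrection (dirichletCorrectionDeriv t) t := by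
  have hs := sin_half_pos ht.1 ht.2
  have hden : HasDerivAt (fun t => 2 * sin (t / 2)) (cos (t / 2)) t := by
    have := ((hasDerivAt_sin (t / 2)).comp t ((hasDerivAt_id t).div_const 2)).const_mul 2
    exact this.congr_deriv (by simp; ring)
  have heq : dirichletCorrection = fun t => (2 * sin (t / 2))⁻¹ - t⁻¹ := by
    funext x; simp [dirichletCorrection, one_div]
  rw [heq, dirichletCorrectionDeriv]
  refine ((hden.inv (by positivity)).sub (hasDerivAt_inv ht.1.ne')).congr_deriv ?_
  field_simp
  ring

lemma dirichletCorrectionDeriv_nonneg (ht : 0 < t) (ht' : t < 2 * π) :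
    0 ≤ dirichletCorrectionDeriv t := by
  have hs := sin_half_pos ht ht'
  have key := sq_mul_cos_le_sin_sq (x := t / 2) (by linarith) (by linarith)
  rw [dirichletCorrectionDeriv, sub_nonneg, div_le_div_iff₀ (by positivity) (by positivity)]
  nlinarith

lemma continuousOn_dirichletCorrectionDeriv :
    ContinuousOn dirichletCorrectionDeriv (Ioo 0 (2 * π)) := by
  unfold dirichletCorrectionDeriv
  refine (continuousOn_const.div (by fun_prop) fun x hx => ?_).sub
    ((by fun_prop : Continuous fun x : ℝ => cos (x / 2)).continuousOn.div (by fun_prop)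
      fun x hx => ?_)
  · exact pow_ne_zero 2 hx.1.ne'
  · exact pow_ne_zero 2 (by have := sin_half_pos hx.1 hx.2; positivity)

lemma monotoneOn_dirichletCorrection : MonotoneOn dirichletCorrection (Ioo 0 (2 * π)) := by
  refine monotoneOn_of_hasDerivWithinAt_nonneg (convex_Ioo _ _)
    (fun x hx => (hasDerivAt_dirichletCorrection hx).continuousAt.continuousWithinAt)
    (fun x hx => ?_) (fun x hx => ?_) (f' := dirichletCorrectionDeriv)
  · rw [interior_Ioo] at hx
    exact (hasDerivAt_dirichletCorrection hx).hasDerivWithinAt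
  · rw [interior_Ioo] at hx
    exact dirichletCorrectionDeriv_nonneg hx.1 hx.2

lemma dirichletCorrection_le_half (ht : 0 < t) (htπ : t ≤ π) : dirichletCorrection t ≤ 1 / 2 := by
  have hpi := pi_pos
  have hmem : ∀ s, 0 < s → s ≤ π → s ∈ Ioo 0 (2 * π) := fun s hs hsπ => ⟨hs, by linarith⟩
  calc dirichletCorrection t ≤ dirichletCorrection π :=
        monotoneOn_dirichletCorrection (hmem t ht htπ) (hmem π hpi le_rfl) htπ
    _ = 1 / 2 - 1 / π := by simp [dirichletCorrection]
    _ ≤ 1 / 2 := by linarith [one_div_pos.2 hpi]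

end DirichletCorrection

section OscillatoryIntegral

variable {l a b : ℝ}

lemma abs_integral_dirichletCorrection_mul_sin_le_of_pos (hl : 0 < l) (ha : 0 < a) (hab : a ≤ b)
    (hbπ : b ≤ π) : |∫ t in a..b, dirichletCorrection t * sin (l * t)| ≤ 1 / l := by
  have hmem : ∀ x ∈ Icc a b, x ∈ Ioo 0 (2 * π) := fun x hx =>
    ⟨ha.trans_le hx.1, by linarith [hx.2, pi_pos]⟩
  have hv : ∀ x ∈ Icc a b, HasDerivAt (fun t => -cos (l * t) / l) (sin (l * x)) x := fun x _ => by
    have := (((hasDerivAt_cos (l * x)).comp x ((hasDerivAt_id x).const_mul l)).neg).div_const l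
    exact this.congr_deriv (by field_simp)
  have hbound := abs_integral_mul_deriv_le_of_deriv_nonneg hab
    (fun x hx => hasDerivAt_dirichletCorrection (hmem x hx))
    ((continuousOn_dirichletCorrectionDeriv.mono ?_).intervalIntegrable)
    (fun x hx => dirichletCorrectionDeriv_nonneg (hmem x hx).1 (hmem x hx).2)
    (dirichletCorrection_nonneg ha (hmem a ⟨le_rfl, hab⟩).2) hv
    ((by fun_prop : Continuous fun t => sin (l * t)).intervalIntegrable a b)
    (C := 1 / l) (fun x _ => by
      rw [abs_div, abs_neg, abs_of_pos hl]
      exact div_le_div_of_nonneg_right (abs_cos_le_one _) hl.le)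
  · have := dirichletCorrection_le_half (ha.trans_le hab) hbπ
    calc _ ≤ 2 * (1 / l) * dirichletCorrection b := hbound
      _ ≤ 2 * (1 / l) * (1 / 2) := by gcongr
      _ = 1 / l := by ring
  · rw [uIcc_of_le hab]
    exact hmem

lemma intervalIntegrable_dirichletCorrection_mul_sin (hb : 0 ≤ b) (hbπ : b ≤ π) :
    IntervalIntegrable (fun t => dirichletCorrection t * sin (l * t)) volume 0 b := by
  rw [intervalIntegrable_iff_integrableOn_Ioc_of_le hb]
  refine Measure.integrableOn_of_bounded (M := 1 / 2) measure_Ioc_lt_top.ne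
    (by unfold dirichletCorrection; fun_prop : Measurable _).aestronglyMeasurable
    ((ae_restrict_iff' measurableSet_Ioc).2 (ae_of_all _ fun t ht => ?_))
  have hnonneg := dirichletCorrection_nonneg ht.1 (by linarith [ht.2, pi_pos])
  rw [Real.norm_eq_abs, abs_mul, abs_of_nonneg hnonneg]
  calc dirichletCorrection t * |sin (l * t)| ≤ dirichletCorrection t * 1 := by
        gcongr; exact abs_sin_le_one _
    _ ≤ 1 / 2 := by linarith [dirichletCorrection_le_half ht.1 (ht.2.trans hbπ)]

lemma abs_integral_dirichletCorrection_mul_sin_le (hl : 0 < l) (hb : 0 < b) (hbπ : b ≤ π) :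
    |∫ t in (0 : ℝ)..b, dirichletCorrection t * sin (l * t)| ≤ 1 / l :=
  abs_intervalIntegral_le_of_forall_Ioc hb
    (intervalIntegrable_dirichletCorrection_mul_sin hb.le hbπ)
    fun _ ha => abs_integral_dirichletCorrection_mul_sin_le_of_pos hl ha.1 ha.2 hbπ

end OscillatoryIntegral

theorem epsilon_m_bound (m : ℕ) (hm : 1 ≤ m) (Δ : ℝ)
    (h1 : 0 < Δ) (h2 : Δ ≤ Real.pi) :
    |∫ t in (0:ℝ)..Δ, (1 / (2 * Real.sin (t / 2)) - 1 / t) *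
        Real.sin ((m + 1 / 2) * t)| ≤ 3 / (2 * m) := by
  have hm' : (1 : ℝ) ≤ m := by exact_mod_cast hm
  calc _ ≤ 1 / ((m : ℝ) + 1 / 2) :=
        abs_integral_dirichletCorrection_mul_sin_le (by positivity) h1 h2
    _ ≤ 3 / (2 * m) := by
        rw [div_le_div_iff₀ (by positivity) (by positivity)]
        linarith
end
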